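/- arXiv:1210.2349 — 5 statements merged into one kernel-verified Lean document; each statement's English description precedes it below -/
import Mathlib

section
/- The field L̃ = ℚ(√2, 3^{1/4}, i), viewed as an intermediate field of ℂ/ℚ, is a Galois extension of ℚ of degree 16: IsGalois ℚ L̃ holds and the finrank of L̃ over ℚ equals 16. -/
/-!
Write `α = 3^{1/4}`. The field `ℚ(√2, α, i)` is generated by the roots `±√2, ±α, ±iα, ±i` of
`(X² - 2)(X⁴ - 3)(X² + 1)`, so it is a splitting field and hence Galois over `ℚ`. Its degree is
computed along the tower `ℚ ⊂ ℚ(α) ⊂ ℚ(α, √2) ⊂ ℚ(α, √2, i)`: `X⁴ - 3` is Eisenstein at `3`;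
`2` is not a square in `ℚ(α)`, as a computation in the basis `1, α, α², α³` shows; and `-1` is
not a square in the real field `ℚ(α, √2)`. The degrees are `4 · 2 · 2 = 16`.
-/

open Polynomial IntermediateField

theorem minpoly.eq_X_pow_sub_C_of_irreducible {K L : Type*} [Field K] [Field L] [Algebra K L]
    {x : L} {n : ℕ} {c : K} (hirr : Irreducible (X ^ n - C c)) (hx : x ^ n = algebraMap K L c) :
    minpoly K x = X ^ n - C c := by
  have hn : n ≠ 0 := by simpa [natDegree_X_pow_sub_C] using hirr.natDegree_pos.ne'
  refine (minpoly.eq_of_irreducible_of_monic hirr ?_ (monic_X_pow_sub_C c hn)).symm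
  simp [hx]

theorem Polynomial.irreducible_X_pow_sub_C_intCast_of_prime {p : ℤ} (hp : Prime p) {n : ℕ}
    (hn : n ≠ 0) : Irreducible (X ^ n - C (p : ℚ)) := by
  have hmonic : (X ^ n - C p).Monic := monic_X_pow_sub_C p hn
  have heis : (X ^ n - C p).IsEisensteinAt (Ideal.span {p}) := by
    refine hmonic.isEisensteinAt_of_mem_of_notMem ?_ (fun hi => ?_) ?_
    · rw [Ne, Ideal.span_singleton_eq_top]
      exact hp.not_isUnit
    · rw [natDegree_X_pow_sub_C] at hi
      rw [coeff_sub, coeff_X_pow, coeff_C, if_neg hi.ne, Ideal.mem_span_singleton]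
      split_ifs <;> simp
    · rw [coeff_sub, coeff_X_pow, coeff_C, if_neg hn.symm, if_pos rfl, Ideal.span_singleton_pow,
        Ideal.mem_span_singleton, zero_sub, dvd_neg, sq]
      exact fun h => hp.not_isUnit
        (isUnit_of_dvd_one ((mul_dvd_mul_iff_left hp.ne_zero).mp (by simpa using h)))
  have := heis.irreducible ((Ideal.span_singleton_prime hp.ne_zero).mpr hp) hmonic.isPrimitive
    (by rw [natDegree_X_pow_sub_C]; omega)
  simpa using (hmonic.irreducible_iff_irreducible_map_fraction_map (K := ℚ)).mp this

namespace IntermediateField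

theorem finrank_adjoin_eq_of_pow_eq {K L : Type*} [Field K] [Field L] [Algebra K L] {x : L}
    {n : ℕ} {c : K} (hirr : Irreducible (X ^ n - C c)) (hx : x ^ n = algebraMap K L c) :
    Module.finrank K K⟮x⟯ = n := by
  have hint : IsIntegral K x := minpoly.ne_zero_iff.mp
    (minpoly.eq_X_pow_sub_C_of_irreducible hirr hx ▸ hirr.ne_zero)
  rw [adjoin.finrank hint, minpoly.eq_X_pow_sub_C_of_irreducible hirr hx,
    natDegree_X_pow_sub_C]

theorem finrank_adjoin_union {F E : Type*} [Field F] [Field E] [Algebra F E] (S T : Set E) :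
    Module.finrank F (adjoin F (S ∪ T)) =
      Module.finrank F (adjoin F S) * Module.finrank (adjoin F S) (adjoin (adjoin F S) T) := by
  rw [← adjoin_adjoin_left]
  exact (Module.finrank_mul_finrank F (adjoin F S) (adjoin (adjoin F S) T)).symm

theorem sq_ne_neg_one_of_subset_range_ofReal {S : Set ℂ} (hS : S ⊆ Set.range ((↑) : ℝ → ℂ))
    (b : adjoin ℚ S) : b ^ 2 ≠ -1 := by
  have hreal : adjoin ℚ S ≤ (⊥ : IntermediateField ℝ ℂ).restrictScalars ℚ :=
    adjoin_le_iff.mpr fun x hx => mem_bot.mpr (hS hx)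
  obtain ⟨r, hr⟩ := mem_bot.mp (hreal b.2)
  intro hb
  have : (r : ℂ) ^ 2 = -1 := by
    rw [← Complex.coe_algebraMap, hr, ← IntermediateField.coe_pow, hb]
    rfl
  have : r ^ 2 = -1 := by exact_mod_cast this
  nlinarith [sq_nonneg r]

theorem isSplittingField_adjoin_of_roots {K E : Type*} [Field K] [Field E] [Algebra K E]
    [IsAlgClosed E] {S : Set E} {p : K[X]} (hp : p ≠ 0) (hS : ∀ x ∈ S, aeval x p = 0)
    (hroots : ∀ x : E, aeval x p = 0 → x ∈ adjoin K S) : p.IsSplittingField K (adjoin K S) := by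
  have : adjoin K S = adjoin K (p.rootSet E) :=
    le_antisymm (adjoin_le_iff.mpr fun x hx => subset_adjoin K _ (mem_rootSet.mpr ⟨hp, hS x hx⟩))
      (adjoin_le_iff.mpr fun x hx => hroots x (mem_rootSet.mp hx).2)
  rw [this]
  exact adjoin_rootSet_isSplittingField (IsAlgClosed.splits _)

variable {F E : Type*} [Field F] [Field E] [Algebra F E] {K : IntermediateField F E}

theorem mem_of_sq_eq_sq {x y : E} (hy : y ∈ K) (h : x ^ 2 = y ^ 2) : x ∈ K := by
  rcases sq_eq_sq_iff_eq_or_eq_neg.mp h with rfl | rfl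
  exacts [hy, K.neg_mem hy]

theorem mem_of_pow_four_eq_pow_four {i x y : E} (hi : i ^ 2 = -1) (hiK : i ∈ K) (hy : y ∈ K)
    (h : x ^ 4 = y ^ 4) : x ∈ K := by
  rcases sq_eq_sq_iff_eq_or_eq_neg.mp (by linear_combination h : (x ^ 2) ^ 2 = (y ^ 2) ^ 2)
    with h | h
  · exact mem_of_sq_eq_sq hy h
  · exact mem_of_sq_eq_sq (K.mul_mem hiK hy) (by linear_combination h - y ^ 2 * hi)

end IntermediateField

local notation "α" => ((((3 : ℝ) ^ ((1 : ℝ) / 4) : ℝ)) : ℂ)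

theorem alpha_pow_four : α ^ 4 = 3 := by
  rw [← Complex.ofReal_pow, ← Real.rpow_natCast, ← Real.rpow_mul (by norm_num)]
  norm_num

theorem ofReal_sqrt_two_sq : (Real.sqrt 2 : ℂ) ^ 2 = 2 := by
  rw [← Complex.ofReal_pow, Real.sq_sqrt (by norm_num)]
  norm_num

theorem minpoly_alpha : minpoly ℚ α = X ^ 4 - C 3 := by
  have := irreducible_X_pow_sub_C_intCast_of_prime Int.prime_three (n := 4) (by norm_num)
  push_cast at this
  exact minpoly.eq_X_pow_sub_C_of_irreducible this (by rw [alpha_pow_four, map_ofNat])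

theorem isIntegral_alpha : IsIntegral ℚ α :=
  minpoly.ne_zero_iff.mp (minpoly_alpha ▸ (monic_X_pow_sub_C _ (by norm_num)).ne_zero)

theorem eq_zero_of_alpha_coords_eq_zero {a b c d : ℚ}
    (h : (a : ℂ) + b * α + c * α ^ 2 + d * α ^ 3 = 0) : a = 0 ∧ b = 0 ∧ c = 0 ∧ d = 0 := by
  have hli := linearIndependent_pow (K := ℚ) α
  rw [minpoly_alpha, natDegree_X_pow_sub_C] at hli
  have := Fintype.linearIndependent_iff.mp hli ![a, b, c, d]
    (by simpa [Fin.sum_univ_four, Rat.smul_def] using h)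
  exact ⟨this 0, this 1, this 2, this 3⟩

theorem exists_alpha_coords {z : ℂ} (hz : z ∈ ℚ⟮α⟯) :
    ∃ a b c d : ℚ, z = a + b * α + c * α ^ 2 + d * α ^ 3 := by
  obtain ⟨f, hdeg, hf⟩ := (adjoin.powerBasis isIntegral_alpha).exists_eq_aeval ⟨z, hz⟩
  rw [adjoin.powerBasis_dim, minpoly_alpha, natDegree_X_pow_sub_C] at hdeg
  have := congrArg (algebraMap ℚ⟮α⟯ ℂ) hf
  rw [← aeval_algebraMap_apply, adjoin.powerBasis_gen, AdjoinSimple.algebraMap_gen,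
    aeval_eq_sum_range' hdeg] at this
  exact ⟨f.coeff 0, f.coeff 1, f.coeff 2, f.coeff 3, by
    simpa [Finset.sum_range_succ, Rat.smul_def] using this⟩

-- The four equations say that the coordinates of `(a + bα + cα² + dα³)² - 2` in the basis
-- `1, α, α², α³` vanish, where `α⁴ = 3`.
theorem quartic_coords_sq_ne_two (a b c d : ℚ) :
    ¬ (a ^ 2 + 3 * c ^ 2 + 6 * b * d = 2 ∧ 2 * a * b + 6 * c * d = 0 ∧
      b ^ 2 + 2 * a * c + 3 * d ^ 2 = 0 ∧ 2 * a * d + 2 * b * c = 0) := by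
  rintro ⟨h1, h2, h3, h4⟩
  have h2_ne : ¬ IsSquare (2 : ℚ) := by norm_num
  have h3_ne : ¬ IsSquare (3 : ℚ) := by norm_num
  have h6_ne : ¬ IsSquare (6 : ℚ) := by norm_num
  have hcbd : c * (3 * d ^ 2 - b ^ 2) = 0 := by linear_combination (d * h2 - b * h4) / 2
  rcases mul_eq_zero.mp hcbd with rfl | hbd
  · have hb : b = 0 := by nlinarith [sq_nonneg b, sq_nonneg d]
    have hd : d = 0 := by nlinarith [sq_nonneg b, sq_nonneg d]
    subst hb hd
    exact h2_ne ⟨a, by linarith⟩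
  by_cases hd : d = 0
  · subst hd
    obtain rfl : b = 0 := by simpa using hbd
    rcases mul_eq_zero.mp (show a * c = 0 by linarith) with rfl | rfl
    · exact h6_ne ⟨3 * c, by linarith⟩
    · exact h2_ne ⟨a, by linarith⟩
  · exact h3_ne ⟨b / d, by field_simp; linarith⟩

theorem sq_ne_two_of_mem_adjoin_alpha (b : ℚ⟮α⟯) : b ^ 2 ≠ 2 := by
  intro hb
  obtain ⟨a₀, a₁, a₂, a₃, hz⟩ := exists_alpha_coords b.2
  have hsq : (b : ℂ) ^ 2 = 2 := by
    rw [← IntermediateField.coe_pow, hb]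
    rfl
  rw [hz] at hsq
  obtain ⟨h₀, h₁, h₂, h₃⟩ := eq_zero_of_alpha_coords_eq_zero
    (a := a₀ ^ 2 + 3 * a₂ ^ 2 + 6 * a₁ * a₃ - 2) (b := 2 * a₀ * a₁ + 6 * a₂ * a₃)
    (c := a₁ ^ 2 + 2 * a₀ * a₂ + 3 * a₃ ^ 2) (d := 2 * a₀ * a₃ + 2 * a₁ * a₂) (by
      push_cast
      linear_combination
        hsq - (a₂ ^ 2 + 2 * a₁ * a₃ + 2 * a₂ * a₃ * α + a₃ ^ 2 * α ^ 2) * alpha_pow_four)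
  exact quartic_coords_sq_ne_two a₀ a₁ a₂ a₃ ⟨by linarith, h₁, h₂, h₃⟩

theorem finrank_adjoin_sqrt_two_alpha_I :
    Module.finrank ℚ (adjoin ℚ ({(Real.sqrt 2 : ℂ), α, Complex.I} : Set ℂ)) = 16 := by
  have hset : ({(Real.sqrt 2 : ℂ), α, Complex.I} : Set ℂ) =
      {α} ∪ {(Real.sqrt 2 : ℂ)} ∪ {Complex.I} := by
    ext
    simp only [Set.mem_insert_iff, Set.mem_singleton_iff, Set.mem_union]
    tauto
  have h₁ : Module.finrank ℚ ℚ⟮α⟯ = 4 :=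
    finrank_adjoin_eq_of_pow_eq (minpoly_alpha ▸ minpoly.irreducible isIntegral_alpha)
      (by rw [alpha_pow_four, map_ofNat])
  have h₂ : Module.finrank ℚ⟮α⟯ ℚ⟮α⟯⟮(Real.sqrt 2 : ℂ)⟯ = 2 :=
    finrank_adjoin_eq_of_pow_eq (X_pow_sub_C_irreducible_of_prime Nat.prime_two
      sq_ne_two_of_mem_adjoin_alpha) (by rw [ofReal_sqrt_two_sq, map_ofNat])
  have h₃ : Module.finrank (adjoin ℚ ({α} ∪ {(Real.sqrt 2 : ℂ)}))
      (adjoin (adjoin ℚ ({α} ∪ {(Real.sqrt 2 : ℂ)})) {Complex.I}) = 2 :=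
    finrank_adjoin_eq_of_pow_eq (X_pow_sub_C_irreducible_of_prime Nat.prime_two
      (sq_ne_neg_one_of_subset_range_ofReal (by simp [Set.insert_subset_iff])))
      (by rw [Complex.I_sq, map_neg, map_one])
  rw [hset, finrank_adjoin_union, finrank_adjoin_union, h₁, h₂, h₃]

theorem isGalois_adjoin_sqrt_two_alpha_I :
    IsGalois ℚ (adjoin ℚ ({(Real.sqrt 2 : ℂ), α, Complex.I} : Set ℂ)) := by
  set T := adjoin ℚ ({(Real.sqrt 2 : ℂ), α, Complex.I} : Set ℂ)
  let p : ℚ[X] := (X ^ 2 - C 2) * (X ^ 4 - C 3) * (X ^ 2 + 1)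
  have hp : p ≠ 0 := ((monic_X_pow_sub_C _ two_ne_zero).mul
    (monic_X_pow_sub_C _ four_ne_zero) |>.mul (monic_X_pow_add_C 1 two_ne_zero)).ne_zero
  have haeval (x : ℂ) : aeval x p = (x ^ 2 - 2) * (x ^ 4 - 3) * (x ^ 2 + 1) := by simp [p]
  have hsqrt : (Real.sqrt 2 : ℂ) ∈ T := subset_adjoin _ _ (by simp)
  have halpha : α ∈ T := subset_adjoin _ _ (by simp)
  have hI : Complex.I ∈ T := subset_adjoin _ _ (by simp)
  have : p.IsSplittingField ℚ T := by
    refine isSplittingField_adjoin_of_roots hp ?_ fun x hx => ?_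
    · rintro x (rfl | rfl | rfl) <;> rw [haeval]
      · rw [ofReal_sqrt_two_sq]; ring
      · rw [alpha_pow_four]; ring
      · rw [Complex.I_sq]; ring
    · rw [haeval] at hx
      rcases mul_eq_zero.mp hx with hx | hx
      · rcases mul_eq_zero.mp hx with hx | hx
        · exact mem_of_sq_eq_sq hsqrt (by linear_combination hx - ofReal_sqrt_two_sq)
        · exact mem_of_pow_four_eq_pow_four Complex.I_sq hI halpha
            (by linear_combination hx - alpha_pow_four)
      · exact mem_of_sq_eq_sq hI (by linear_combination hx - Complex.I_sq)
  have := Normal.of_isSplittingField (F := ℚ) (E := T) p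
  exact {}

theorem stmt_2 :
    IsGalois ℚ (IntermediateField.adjoin ℚ
      ({(Real.sqrt 2 : ℂ), (((3 : ℝ) ^ ((1 : ℝ) / 4) : ℝ) : ℂ), Complex.I} : Set ℂ)) ∧
    Module.finrank ℚ (IntermediateField.adjoin ℚ
      ({(Real.sqrt 2 : ℂ), (((3 : ℝ) ^ ((1 : ℝ) / 4) : ℝ) : ℂ), Complex.I} : Set ℂ)) = 16 :=
  ⟨isGalois_adjoin_sqrt_two_alpha_I, finrank_adjoin_sqrt_two_alpha_I⟩
end

section
/- The polynomial X⁴ − 2X³ + 4X − 2 is irreducible over ℚ, and consequently the field ℚ(s₃) ⊆ ℂ generated over ℚ by s₃ = (1 − √2·3^{1/4} − √3)/2 has degree 4 over ℚ (i.e., the finrank of IntermediateField.adjoin ℚ {s₃} over ℚ equals 4). -/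
/-! `s₃` is a root of `X⁴ - 2X³ + 4X - 2`, which is Eisenstein at `2`, hence irreducible over `ℤ`
and, by Gauss's lemma, over `ℚ`. It is therefore the minimal polynomial of `s₃`, so `ℚ(s₃)` has
degree `4`. -/

open Polynomial

noncomputable def sThree : ℂ :=
  (1 - (Real.sqrt 2 : ℂ) * (((3 : ℝ) ^ ((1 : ℝ) / 4) : ℝ) : ℂ) - (Real.sqrt 3 : ℂ)) / 2

section Quartic

variable (R : Type*) [CommRing R]

noncomputable abbrev quartic : R[X] := X ^ 4 - 2 * X ^ 3 + 4 * X - 2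

variable {R}

theorem quartic_monic [Nontrivial R] : (quartic R).Monic := by
  unfold quartic; monicity!

theorem quartic_natDegree [Nontrivial R] : (quartic R).natDegree = 4 := by
  unfold quartic; compute_degree!

theorem map_quartic {S : Type*} [CommRing S] (f : R →+* S) : (quartic R).map f = quartic S := by
  simp [quartic, Polynomial.map_sub, Polynomial.map_add, Polynomial.map_mul, Polynomial.map_pow]

end Quartic

theorem quartic_isEisensteinAt_two : (quartic ℤ).IsEisensteinAt (Ideal.span {2}) := by
  refine ⟨?_, fun {n} hn => ?_, ?_⟩
  · rw [quartic_monic.leadingCoeff, Ideal.mem_span_singleton]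
    decide
  · rw [quartic_natDegree] at hn
    rw [Ideal.mem_span_singleton]
    interval_cases n <;> simp [quartic, coeff_X]
  · rw [Ideal.span_singleton_pow, Ideal.mem_span_singleton]
    simp [quartic, coeff_X]

theorem irreducible_quartic_int : Irreducible (quartic ℤ) :=
  quartic_isEisensteinAt_two.irreducible
    ((Ideal.span_singleton_prime two_ne_zero).mpr Int.prime_two)
    quartic_monic.isPrimitive (by rw [quartic_natDegree]; decide)

theorem irreducible_quartic_rat : Irreducible (quartic ℚ) := by
  rw [← map_quartic (Int.castRingHom ℚ)]
  exact (IsPrimitive.Int.irreducible_iff_irreducible_map_cast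
    quartic_monic.isPrimitive).mp irreducible_quartic_int

theorem sq_rpow_one_div_four {x : ℝ} (hx : 0 ≤ x) : (x ^ ((1 : ℝ) / 4)) ^ 2 = √x := by
  rw [Real.sqrt_eq_rpow, ← Real.rpow_natCast, ← Real.rpow_mul hx]
  norm_num

theorem aeval_sThree_quartic : aeval sThree (quartic ℚ) = 0 := by
  set a := √2
  set b := (3 : ℝ) ^ ((1 : ℝ) / 4)
  set c := √3
  have ha : a ^ 2 = 2 := Real.sq_sqrt (by norm_num)
  have hc : c ^ 2 = 3 := Real.sq_sqrt (by norm_num)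
  have hb : b ^ 2 = c := sq_rpow_one_div_four (by norm_num)
  have hreal : ((1 - a * b - c) / 2) ^ 4 - 2 * ((1 - a * b - c) / 2) ^ 3
      + 4 * ((1 - a * b - c) / 2) - 2 = 0 := by
    linear_combination
      (-3/8 * b ^ 2 + 1/16 * a ^ 2 * b ^ 4 + 1/4 * a * b ^ 3 * c + 3/8 * b ^ 2 * c ^ 2
        + 1/8 * b ^ 2 * c) * ha
      + (-3/4 + 1/8 * a ^ 2 * b ^ 2 + 1/2 * a * b * c + 3/4 * c ^ 2 + 1/4 * c) * hb
      + (1/16 + 1/4 * a * b * c + 1/16 * c ^ 2 + 1/2 * a * b + 3/4 * c) * hc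
  have hs : sThree = (((1 - a * b - c) / 2 : ℝ) : ℂ) := by
    unfold sThree; push_cast; ring
  simp only [quartic, map_sub, map_add, map_mul, map_pow, aeval_X, map_ofNat, hs]
  exact_mod_cast congrArg Complex.ofReal hreal

theorem minpoly_sThree : minpoly ℚ sThree = quartic ℚ :=
  (minpoly.eq_of_irreducible_of_monic irreducible_quartic_rat aeval_sThree_quartic
    quartic_monic).symm

theorem stmt_6 :
    Irreducible (X ^ 4 - 2 * X ^ 3 + 4 * X - 2 : ℚ[X]) ∧
    Module.finrank ℚ (IntermediateField.adjoin ℚ ({sThree} : Set ℂ)) = 4 := by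
  refine ⟨irreducible_quartic_rat, ?_⟩
  have hint : IsIntegral ℚ sThree := ⟨_, quartic_monic, aeval_sThree_quartic⟩
  rw [IntermediateField.adjoin.finrank hint, minpoly_sThree, quartic_natDegree]
end

section
/- Let s ∈ ℂ with s ≠ 0 and s ≠ 1. Suppose f ∈ ℂ[X] is a polynomial of degree 4 with f(0) = 0, f(1) = 1, and whose derivative vanishes at 0, 1 and s (i.e., f'(0) = f'(1) = f'(s) = 0). Then 2s − 1 ≠ 0 and f is uniquely determined: f = (12/(2s − 1))·((1/4)X⁴ − ((s+1)/3)X³ + (s/2)X²). -/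
/-!
The conditions on `f'` pin it down up to a scalar: it has degree at most 3 and vanishes at the
three distinct points `0, 1, s`, so `f' = c · X (X - 1) (X - s)`. Integrating with `f(0) = 0`
gives `f = c · P_s` for the primitive `P_s = X⁴/4 - (s+1)X³/3 + sX²/2`, and `f(1) = 1` reads
`c (2s - 1) / 12 = 1`, which forces `2s - 1 ≠ 0` and `c = 12 / (2s - 1)`.
-/

open Polynomial Finset

namespace Polynomial

theorem eq_C_coeff_mul_prod_X_sub_C {R : Type*} [CommRing R] [IsDomain R] {p : R[X]}
    (s : Finset R) (hdeg : p.natDegree ≤ #s) (hroot : ∀ a ∈ s, p.IsRoot a) :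
    p = C (p.coeff #s) * ∏ a ∈ s, (X - C a) := by
  have hmonic : (∏ a ∈ s, (X - C a)).Monic := monic_prod_of_monic _ _ fun a _ => monic_X_sub_C a
  have hprod_deg : (∏ a ∈ s, (X - C a)).natDegree = #s := natDegree_finsetProd_X_sub_C_eq_card s id
  refine eq_of_degree_sub_lt_of_eval_finset_eq s ?_ fun a ha => ?_
  · rw [degree_lt_iff_coeff_zero]
    intro m hm
    rcases hm.eq_or_lt with rfl | hlt
    · rw [coeff_sub, coeff_C_mul, ← hprod_deg, hmonic.coeff_natDegree, mul_one, sub_self]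
    · rw [coeff_sub, coeff_eq_zero_of_natDegree_lt (hdeg.trans_lt hlt),
        coeff_eq_zero_of_natDegree_lt ((natDegree_C_mul_le _ _).trans_lt (hprod_deg ▸ hlt)),
        sub_zero]
  · rw [(hroot a ha).eq_zero, eval_mul, eval_prod, prod_eq_zero ha (by simp), mul_zero]

end Polynomial

section CriticalPrimitive

variable {K : Type*} [Field K]

noncomputable def criticalPrimitive (s : K) : K[X] :=
  C (1 / 4 : K) * X ^ 4 - C ((s + 1) / 3) * X ^ 3 + C (s / 2) * X ^ 2

theorem derivative_criticalPrimitive [CharZero K] (s : K) :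
    derivative (criticalPrimitive s) = X * (X - 1) * (X - C s) := by
  simp only [criticalPrimitive, derivative_add, derivative_sub, derivative_C_mul_X_pow]
  norm_num [map_add, C_1]
  ring

theorem eval_zero_criticalPrimitive (s : K) : (criticalPrimitive s).eval 0 = 0 := by
  simp [criticalPrimitive]

theorem eval_one_criticalPrimitive [CharZero K] (s : K) :
    (criticalPrimitive s).eval 1 = (2 * s - 1) / 12 := by
  simp [criticalPrimitive]
  ring

end CriticalPrimitive

theorem stmt_7 (s : ℂ) (hs0 : s ≠ 0) (hs1 : s ≠ 1) (f : ℂ[X])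
    (hdeg : f.degree = 4)
    (hf0 : f.eval 0 = 0) (hf1 : f.eval 1 = 1)
    (hd0 : (derivative f).eval 0 = 0) (hd1 : (derivative f).eval 1 = 0)
    (hds : (derivative f).eval s = 0) :
    2 * s - 1 ≠ 0 ∧
    f = C (12 / (2 * s - 1)) *
      (C (1 / 4 : ℂ) * X ^ 4 - C ((s + 1) / 3) * X ^ 3 + C (s / 2) * X ^ 2) := by
  have hcard : #({0, 1, s} : Finset ℂ) = 3 := by
    rw [card_insert_of_notMem (by simp [hs0.symm]), card_pair hs1.symm]
  set c := (derivative f).coeff 3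
  have hf' : derivative f = C c * derivative (criticalPrimitive s) := by
    have hdeg' : (derivative f).natDegree ≤ #({0, 1, s} : Finset ℂ) := by
      rw [hcard, natDegree_derivative, natDegree_eq_of_degree_eq_some hdeg]
    rw [eq_C_coeff_mul_prod_X_sub_C _ hdeg' (by simp [hd0, hd1, hds]), hcard,
      derivative_criticalPrimitive, prod_insert (by simp [hs0.symm]), prod_pair hs1.symm,
      C_0, C_1, sub_zero]
    ring
  have hf : f = C c * criticalPrimitive s := by
    have hconst := eq_C_of_derivative_eq_zero (p := f - C c * criticalPrimitive s)
      (by rw [derivative_sub, derivative_C_mul, hf', sub_self])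
    rwa [coeff_zero_eq_eval_zero, eval_sub, eval_mul, eval_C, hf0, eval_zero_criticalPrimitive,
      mul_zero, sub_zero, C_0, sub_eq_zero] at hconst
  have hc : c * (2 * s - 1) = 12 := by
    rw [hf, eval_mul, eval_C, eval_one_criticalPrimitive] at hf1
    linear_combination 12 * hf1
  have h2s : 2 * s - 1 ≠ 0 := by
    rintro h
    simp [h] at hc
  refine ⟨h2s, ?_⟩
  rw [hf, eq_div_of_mul_eq h2s hc]
  rfl
end

section
/- Let α ∈ ℂ be any root of φ(X) = X⁴ − 2X³ + 6X − 3. Then the field K = ℚ(α) has degree 4 over ℚ and has no subfields other than ℚ and K itself: every intermediate field F of the extension K/ℚ satisfies F = ⊥ or F = ⊤. -/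
/-!
Over a field `E` of characteristic zero, `φ = X⁴ - 2X³ + 6X - 3` is irreducible as soon as it has
no root in `E` and `24` has no cube root in `E`: a factorisation into monic quadratics
`(X² + aX + b)(X² + cX + d)` makes `b + d` a root of the resolvent cubic `X³ - 24`.
Over `ℚ` both conditions follow from the rational root theorem, so `[ℚ(α) : ℚ] = 4`. Over a field
`F` with `[F : ℚ] ≤ 2` they hold because roots of `φ` have degree `4` and cube roots of `24`
degree `3` over `ℚ`. Hence an intermediate field `F` of `ℚ(α)` with `[F : ℚ] ≤ 2` has
`[ℚ(α) : F] ≥ 4`, forcing `F = ℚ`, and otherwise `[F : ℚ] = 4`, i.e. `F = ℚ(α)`.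
-/

open Polynomial Module

noncomputable def phi (R : Type*) [CommRing R] : R[X] := X ^ 4 - 2 * X ^ 3 + 6 * X - 3

section CommRing

variable {R S : Type*} [CommRing R] [CommRing S]

lemma phi_monic : (phi R).Monic := by
  unfold phi; monicity!

lemma natDegree_phi [Nontrivial R] : (phi R).natDegree = 4 := by
  unfold phi; compute_degree!

@[simp] lemma aeval_phi [Algebra R S] (x : S) :
    aeval x (phi R) = x ^ 4 - 2 * x ^ 3 + 6 * x - 3 := by
  simp [phi, map_ofNat]

@[simp] lemma eval_phi (x : R) : (phi R).eval x = x ^ 4 - 2 * x ^ 3 + 6 * x - 3 := by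
  simp [phi]

lemma Polynomial.Monic.eq_X_sq_add_C_mul_X_add_C {p : R[X]} (hp : p.Monic)
    (h : p.natDegree = 2) : p = X ^ 2 + C (p.coeff 1) * X + C (p.coeff 0) := by
  conv_lhs => rw [hp.as_sum, h]
  simp [Finset.sum_range_succ]
  ring

lemma coeffs_of_phi_eq_mul {a b c d : R}
    (h : (X ^ 2 + C a * X + C b) * (X ^ 2 + C c * X + C d) = phi R) :
    a + c = -2 ∧ b + d + a * c = 0 ∧ a * d + b * c = 6 ∧ b * d = -3 := by
  have hk (k : ℕ) : ((X ^ 2 + C a * X + C b) * (X ^ 2 + C c * X + C d)).coeff k =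
      (phi R).coeff k := by rw [h]
  have expand_mul : (X ^ 2 + C a * X + C b) * (X ^ 2 + C c * X + C d) = X ^ 4 + C (a + c) * X ^ 3
      + C (b + d + a * c) * X ^ 2 + C (a * d + b * c) * X + C (b * d) := by
    simp only [map_add, map_mul]; ring
  have expand_phi : phi R = X ^ 4 + C (-2) * X ^ 3 + C 0 * X ^ 2 + C 6 * X + C (-3) := by
    simp only [phi, map_neg, map_ofNat, map_zero]; ring
  simp only [expand_mul, expand_phi, coeff_add, coeff_C_mul, coeff_X_pow, coeff_X, coeff_C] at hk
  exact ⟨by simpa using hk 3, by simpa using hk 2, by simpa using hk 1, by simpa using hk 0⟩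

end CommRing

section Field

variable {E : Type*} [Field E] [CharZero E]

lemma cube_eq_of_phi_eq_mul {a b c d : E}
    (h : (X ^ 2 + C a * X + C b) * (X ^ 2 + C c * X + C d) = phi E) : (b + d) ^ 3 = 24 := by
  obtain ⟨h3, h2, h1, h0⟩ := coeffs_of_phi_eq_mul h
  have ha : a + 1 ≠ 0 := by
    intro ha
    have hc : c + 1 = 0 := by linear_combination h3 - ha
    have : (5 : E) = 0 := by linear_combination -h2 - h1 + (c + d) * ha + (b - 1) * hc
    norm_num at this
  -- solve the linear equations for `b` and `d`, then substitute into `b * d = -3`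
  have hbd : b + d = a ^ 2 + 2 * a := by linear_combination h2 - a * h3
  have hb : b * (2 * (a + 1)) = a ^ 3 + 2 * a ^ 2 - 6 := by
    linear_combination (b - a ^ 2) * h3 + a * h2 - h1
  have hd : d * (2 * (a + 1)) = a ^ 3 + 4 * a ^ 2 + 4 * a + 6 := by
    linear_combination 2 * (a + 1) * hbd - hb
  rw [hbd]
  linear_combination 4 * (a + 1) ^ 2 * h0 - 2 * (a + 1) * b * hd
    - (a ^ 3 + 4 * a ^ 2 + 4 * a + 6) * hb

lemma irreducible_phi_of_forall_ne (hroot : ∀ r : E, (phi E).eval r ≠ 0)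
    (hcube : ∀ y : E, y ^ 3 ≠ 24) : Irreducible (phi E) := by
  have hdeg : (phi E).natDegree = 4 := natDegree_phi
  refine phi_monic.irreducible_iff_natDegree'.mpr ⟨fun h => by simp [h] at hdeg, ?_⟩
  rintro f g hf hg hfg hg_deg
  rw [hdeg, Finset.mem_Ioc] at hg_deg
  have hsum : f.natDegree + g.natDegree = 4 := by rw [← hf.natDegree_mul hg, hfg, hdeg]
  obtain hg1 | hg2 : g.natDegree = 1 ∨ g.natDegree = 2 := by omega
  · refine hroot (-g.coeff 0) ?_
    rw [← hfg, hg.eq_X_add_C hg1]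
    simp
  · rw [hf.eq_X_sq_add_C_mul_X_add_C (by omega), hg.eq_X_sq_add_C_mul_X_add_C hg2] at hfg
    exact hcube _ (cube_eq_of_phi_eq_mul hfg)

end Field

lemma rat_pow_three_ne_24 (q : ℚ) : q ^ 3 ≠ 24 := by
  intro hq
  obtain ⟨n, rfl, -⟩ := exists_integer_of_is_root_of_monic
    (monic_X_pow_sub_C (24 : ℤ) three_ne_zero) (r := q) (by simp [hq, map_ofNat])
  have hn : n ^ 3 = 24 := by
    simp only [algebraMap_int_eq, eq_intCast] at hq
    exact_mod_cast hq
  rcases le_or_gt n 2 with h | h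
  · nlinarith [sq_nonneg (n + 1)]
  · nlinarith [sq_nonneg (2 * n + 3)]

lemma eval_phi_rat_ne_zero (q : ℚ) : (phi ℚ).eval q ≠ 0 := by
  intro hq
  obtain ⟨n, rfl, hn⟩ := exists_integer_of_is_root_of_monic (phi_monic (R := ℤ)) (r := q)
    (by simpa using hq)
  have hn3 : n ∣ 3 := by simpa [phi] using hn
  have hn0 : n ^ 4 - 2 * n ^ 3 + 6 * n - 3 = 0 := by
    simp at hq
    exact_mod_cast hq
  have hle : n ≤ 3 := Int.le_of_dvd three_pos hn3
  have hge : -3 ≤ n := neg_le.mp (Int.le_of_dvd three_pos (neg_dvd.mpr hn3))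
  interval_cases n <;> norm_num at hn0

lemma irreducible_phi_rat : Irreducible (phi ℚ) :=
  irreducible_phi_of_forall_ne eval_phi_rat_ne_zero rat_pow_three_ne_24

lemma minpoly_eq_phi {K L : Type*} [Field K] [Field L] [Algebra K L] (hK : Irreducible (phi K))
    {x : L} (hx : aeval x (phi K) = 0) : minpoly K x = phi K :=
  (minpoly.eq_of_irreducible_of_monic hK hx phi_monic).symm

lemma irreducible_phi_of_finrank_le_two {E : Type*} [Field E] [Algebra ℚ E]
    [FiniteDimensional ℚ E] (hE : finrank ℚ E ≤ 2) : Irreducible (phi E) := by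
  have := charZero_of_injective_algebraMap (algebraMap ℚ E).injective
  refine irreducible_phi_of_forall_ne (fun r hr => ?_) (fun y hy => ?_)
  · have hdeg := minpoly.natDegree_le (A := ℚ) r
    rw [minpoly_eq_phi irreducible_phi_rat (by simpa using hr), natDegree_phi] at hdeg
    omega
  · have hirr : Irreducible (X ^ 3 - C (24 : ℚ)) :=
      X_pow_sub_C_irreducible_of_prime Nat.prime_three rat_pow_three_ne_24
    have hmin := minpoly.eq_of_irreducible_of_monic hirr (x := y) (by simp [hy, map_ofNat])
      (monic_X_pow_sub_C _ three_ne_zero)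
    have hdeg := minpoly.natDegree_le (A := ℚ) y
    rw [← hmin, natDegree_X_pow_sub_C] at hdeg
    omega

lemma IntermediateField.eq_bot_or_eq_top_of_aeval_phi {K : Type*} [Field K] [Algebra ℚ K]
    (hK : finrank ℚ K = 4) {β : K} (hβ : aeval β (phi ℚ) = 0) (F : IntermediateField ℚ K) :
    F = ⊥ ∨ F = ⊤ := by
  have : FiniteDimensional ℚ K := .of_finrank_pos (by omega)
  have htower := finrank_mul_finrank ℚ F K
  have hpos : 0 < finrank F K := finrank_pos
  rcases le_or_gt (finrank ℚ F) 2 with hF | hF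
  · -- instance search would pick `DivisionRing.toRatAlgebra`, whose module structure is not
    -- reducibly the one appearing in `finrank ℚ F`
    let : Algebra ℚ F := F.algebra'
    have : FiniteDimensional ℚ F := .left ℚ F K
    have hdeg := minpoly.natDegree_le (A := F) β
    rw [minpoly_eq_phi (irreducible_phi_of_finrank_le_two hF) (by simpa using hβ),
      natDegree_phi] at hdeg
    left
    rw [← finrank_eq_one_iff]
    nlinarith
  · right
    rw [← finrank_eq_one_iff_eq_top]
    nlinarith

theorem stmt_11 (α : ℂ) (hα : α ^ 4 - 2 * α ^ 3 + 6 * α - 3 = 0) :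
    Module.finrank ℚ (IntermediateField.adjoin ℚ ({α} : Set ℂ)) = 4 ∧
    ∀ F : IntermediateField ℚ (IntermediateField.adjoin ℚ ({α} : Set ℂ)),
      F = ⊥ ∨ F = ⊤ := by
  have hroot : aeval α (phi ℚ) = 0 := by simpa using hα
  have hint : IsIntegral ℚ α := ⟨phi ℚ, phi_monic, by rwa [← aeval_def]⟩
  have hK : finrank ℚ (IntermediateField.adjoin ℚ ({α} : Set ℂ)) = 4 := by
    rw [IntermediateField.adjoin.finrank hint, minpoly_eq_phi irreducible_phi_rat hroot,
      natDegree_phi]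
  refine ⟨hK, IntermediateField.eq_bot_or_eq_top_of_aeval_phi hK
    (β := IntermediateField.AdjoinSimple.gen ℚ α) ?_⟩
  apply (algebraMap _ ℂ).injective
  rw [map_zero, ← aeval_algebraMap_apply, IntermediateField.AdjoinSimple.algebraMap_gen, hroot]
end

section
/- Let n ≥ 3 and let α₁, …, α_{n−1} be real numbers which are algebraically independent over ℚ. Let f ∈ ℝ[X] be the polynomial with f(0) = 0 whose derivative is f'(X) = (X − α₁)⋯(X − α_{n−1}). Then the critical values f(α₁), …, f(α_{n−1}) are pairwise distinct: f(αᵢ) ≠ f(αⱼ) whenever i ≠ j. -/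
/-!
Work first with the generic polynomial: the antiderivative `F` of `∏ₖ (X - xₖ)` with coefficients
in `ℚ[x₁, …, x_{n-1}]` has `F(xᵢ) ≠ F(xⱼ)`, because specializing `xᵢ ↦ 1` and every other `xₖ ↦ 0`
turns `F` into `Xⁿ/n - Xⁿ⁻¹/(n-1)`, whose values at `1` and `0` differ. Antidifferentiation only
divides coefficients by integers, so `f` is the image of `F` under evaluation at `α`, and algebraic
independence says exactly that this evaluation is injective.
-/

open Polynomial

namespace Polynomial

theorem eq_of_derivative_eq_of_eval_zero_eq {R : Type*} [Ring R] [IsAddTorsionFree R]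
    {f g : R[X]} (hd : derivative f = derivative g) (h0 : f.eval 0 = g.eval 0) : f = g := by
  have hC := eq_C_of_derivative_eq_zero
    (by rw [derivative_sub, hd, sub_self] : derivative (f - g) = 0)
  rwa [coeff_zero_eq_eval_zero, eval_sub, h0, sub_self, map_zero, sub_eq_zero] at hC

theorem map_prod_X_sub_C {ι R S : Type*} [CommRing R] [CommRing S] (φ : R →+* S)
    (s : Finset ι) (a : ι → R) :
    (∏ k ∈ s, (X - C (a k))).map φ = ∏ k ∈ s, (X - C (φ (a k))) := by
  simp [Polynomial.map_prod]

theorem prod_X_sub_C_pi_single {ι K : Type*} [Fintype ι] [DecidableEq ι] [CommRing K]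
    (i : ι) (a : K) :
    ∏ k, (X - C (Pi.single i a k)) = (X - C a) * X ^ (Fintype.card ι - 1) := by
  rw [Fintype.prod_eq_mul_prod_compl i, Pi.single_eq_same, Finset.prod_congr rfl fun k hk => by
    rw [Pi.single_eq_of_ne (Finset.mem_compl.1 hk ∘ Finset.mem_singleton.2), map_zero, sub_zero],
    Finset.prod_const, Finset.card_compl, Finset.card_singleton]

theorem mem_lifts_of_derivative_mem_lifts {R S : Type*} [CommRing R] [CommRing S]
    [Algebra ℚ R] [Algebra ℚ S] (φ : R →+* S) {f : S[X]}
    (hd : derivative f ∈ lifts φ) (h0 : f.eval 0 ∈ Set.range φ) : f ∈ lifts φ := by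
  rw [lifts_iff_coeff_lifts] at hd ⊢
  rintro (_ | k)
  · simpa [coeff_zero_eq_eval_zero] using h0
  · obtain ⟨r, hr⟩ := hd k
    refine ⟨(k + 1 : ℚ)⁻¹ • r, ?_⟩
    have hk : (k + 1 : ℚ)⁻¹ • ((k : S) + 1) = 1 := by
      rw [show (k : S) + 1 = (k + 1 : ℚ) • (1 : S) by simp [Algebra.smul_def], smul_smul,
        inv_mul_cancel₀ (by positivity), one_smul]
    rw [map_rat_smul, hr, coeff_derivative, ← mul_smul_comm, hk, mul_one]

theorem exists_map_eq_of_derivative_eq_map {R S : Type*} [CommRing R] [CommRing S]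
    [Algebra ℚ R] [Algebra ℚ S] {φ : R →+* S} (hφ : Function.Injective φ) {f : S[X]} {p : R[X]}
    (hd : derivative f = p.map φ) (h0 : f.eval 0 = 0) :
    ∃ F : R[X], F.map φ = f ∧ derivative F = p ∧ F.eval 0 = 0 := by
  obtain ⟨F, hF⟩ := (mem_lifts _).1 <|
    mem_lifts_of_derivative_mem_lifts φ ⟨p, hd.symm⟩ ⟨0, by rw [h0, map_zero]⟩
  refine ⟨F, hF, map_injective φ hφ ?_, hφ ?_⟩
  · rw [← derivative_map, hF, hd]
  · rw [← eval_zero_map, hF, h0, map_zero]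

theorem eval_one_ne_zero_of_derivative_eq {K : Type*} [Field K] [CharZero K] {g : K[X]} (m : ℕ)
    (hd : derivative g = (X - 1) * X ^ m) (h0 : g.eval 0 = 0) : g.eval 1 ≠ 0 := by
  have hg : g = C ((m + 2 : K)⁻¹) * X ^ (m + 2) - C ((m + 1 : K)⁻¹) * X ^ (m + 1) := by
    refine eq_of_derivative_eq_of_eval_zero_eq ?_ (by simp [h0])
    rw [hd, derivative_sub, derivative_C_mul_X_pow, derivative_C_mul_X_pow]
    push_cast
    rw [inv_mul_cancel₀ (by norm_cast), inv_mul_cancel₀ m.cast_add_one_ne_zero]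
    simp only [map_one, one_mul]
    ring
  rw [hg]
  simp [sub_eq_zero]

theorem eval_X_ne_eval_X_of_derivative_eq_prod {σ : Type*} [Fintype σ] [DecidableEq σ]
    {F : (MvPolynomial σ ℚ)[X]} (hF' : derivative F = ∏ k, (X - C (MvPolynomial.X k)))
    (hF0 : F.eval 0 = 0) {i j : σ} (hij : i ≠ j) :
    F.eval (MvPolynomial.X i) ≠ F.eval (MvPolynomial.X j) := by
  intro hFij
  let ψ : MvPolynomial σ ℚ →+* ℚ := MvPolynomial.aeval (R := ℚ) (Pi.single i 1 : σ → ℚ)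
  have hψX (k : σ) : ψ (MvPolynomial.X k) = (Pi.single i 1 : σ → ℚ) k :=
    MvPolynomial.aeval_X (R := ℚ) _ k
  have hG' : derivative (F.map ψ) = (X - 1) * X ^ (Fintype.card σ - 1) := by
    rw [derivative_map, hF', map_prod_X_sub_C]
    simp only [hψX, prod_X_sub_C_pi_single, map_one]
  refine eval_one_ne_zero_of_derivative_eq _ hG' (by rw [eval_zero_map, hF0, map_zero]) ?_
  calc (F.map ψ).eval 1 = ψ (F.eval (MvPolynomial.X i)) := by
        rw [← eval_map_apply, hψX, Pi.single_eq_same]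
    _ = ψ (F.eval (MvPolynomial.X j)) := by rw [hFij]
    _ = 0 := by
        rw [← eval_map_apply, hψX, Pi.single_eq_of_ne hij.symm, eval_zero_map, hF0, map_zero]

end Polynomial

theorem stmt_14_general (n : ℕ) (α : Fin (n - 1) → ℝ)
    (hα : AlgebraicIndependent ℚ α) (f : ℝ[X])
    (hf0 : f.eval 0 = 0)
    (hf' : derivative f = ∏ i : Fin (n - 1), (X - C (α i))) :
    ∀ i j : Fin (n - 1), i ≠ j → f.eval (α i) ≠ f.eval (α j) := by
  intro i j hij hfij
  let φ : MvPolynomial (Fin (n - 1)) ℚ →+* ℝ := MvPolynomial.aeval (R := ℚ) α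
  have hφ : Function.Injective φ := hα
  have hφX (k : Fin (n - 1)) : φ (MvPolynomial.X k) = α k := MvPolynomial.aeval_X α k
  obtain ⟨F, hF, hF', hF0⟩ := exists_map_eq_of_derivative_eq_map hφ
    (p := ∏ k, (X - C (MvPolynomial.X k))) (by rw [hf', map_prod_X_sub_C]; simp only [hφX]) hf0
  refine eval_X_ne_eval_X_of_derivative_eq_prod hF' hF0 hij (hφ ?_)
  rwa [← hφX i, ← hφX j, ← hF, eval_map_apply, eval_map_apply] at hfij

theorem stmt_14 (n : ℕ) (hn : 3 ≤ n) (α : Fin (n - 1) → ℝ)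
    (hα : AlgebraicIndependent ℚ α) (f : ℝ[X])
    (hf0 : f.eval 0 = 0)
    (hf' : derivative f = ∏ i : Fin (n - 1), (X - C (α i))) :
    ∀ i j : Fin (n - 1), i ≠ j → f.eval (α i) ≠ f.eval (α j) :=
  stmt_14_general n α hα f hf0 hf'
end
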